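/- In a finite argumentation framework, there is a unique ⊆-minimal complete extension (the grounded extension), and it is contained in every complete extension. -/
import Mathlib


def conflictFree {α : Type*} (R : α → α → Prop) (S : Set α) : Prop :=
  ∀ a ∈ S, ∀ b ∈ S, ¬ R a b

def defends {α : Type*} (R : α → α → Prop) (S : Set α) (a : α) : Prop :=
  ∀ b, R b a → ∃ c ∈ S, R c b

def admissible {α : Type*} (R : α → α → Prop) (S : Set α) : Prop :=
  conflictFree R S ∧ ∀ a ∈ S, defends R S a

def completeExt {α : Type*} (R : α → α → Prop) (S : Set α) : Prop :=
  admissible R S ∧ ∀ a, defends R S a → a ∈ S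

def stableExt {α : Type*} (R : α → α → Prop) (S : Set α) : Prop :=
  conflictFree R S ∧ ∀ a, a ∉ S → ∃ b ∈ S, R b a

def Dfun {α : Type*} (R : α → α → Prop) (S : Set α) : Set α := {a | defends R S a}

lemma Dfun_mono {α : Type*} (R : α → α → Prop) {S T : Set α} (h : S ⊆ T) :
    Dfun R S ⊆ Dfun R T := by
  intro a ha b hb
  obtain ⟨c, hc, hcb⟩ := ha b hb
  exact ⟨c, h hc, hcb⟩

lemma subset_Dfun {α : Type*} {R : α → α → Prop} {S : Set α} (h : admissible R S) :
    S ⊆ Dfun R S := fun a ha => h.2 a ha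

lemma adm_Dfun {α : Type*} {R : α → α → Prop} {S : Set α} (h : admissible R S) :
    admissible R (Dfun R S) := by
  constructor
  · intro a ha b hb hab
    obtain ⟨c, hcS, hca⟩ := hb a hab
    obtain ⟨d, hdS, hdc⟩ := ha c hca
    exact h.1 d hdS c hcS hdc
  · intro a ha b hb
    obtain ⟨c, hc, hcb⟩ := ha b hb
    exact ⟨c, subset_Dfun h hc, hcb⟩

theorem grounded_exists_unique {α : Type*} [Fintype α] (R : α → α → Prop) :
    ∃ G : Set α, completeExt R G ∧ (∀ S, completeExt R S → G ⊆ S) ∧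
      ∀ G', completeExt R G' → (∀ S, completeExt R S → ¬ S ⊂ G') → G' = G := by
  classical
  set f : ℕ → Set α := fun n => (Dfun R)^[n] ∅ with hf
  have hsucc : ∀ n, f (n + 1) = Dfun R (f n) := fun n =>
    Function.iterate_succ_apply' (Dfun R) n ∅
  have hadm : ∀ n, admissible R (f n) := by
    intro n
    induction n with
    | zero => exact ⟨fun a ha => ha.elim, fun a ha => ha.elim⟩
    | succ k ih => rw [hsucc]; exact adm_Dfun ih
  have hmono : ∀ n, f n ⊆ f (n + 1) := by
    intro n
    induction n with
    | zero => intro a ha; exact ha.elim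
    | succ k ih => rw [hsucc, hsucc]; exact Dfun_mono R ih
  have hstab : ∃ n, f (n + 1) = f n := by
    by_contra h
    push_neg at h
    have hs : StrictMono f :=
      strictMono_nat_of_lt_succ fun n => (hmono n).ssubset_of_ne (h n).symm
    obtain ⟨a, b, hab, heq⟩ := Finite.exists_ne_map_eq_of_infinite f
    exact hab (hs.injective heq)
  obtain ⟨n, hn⟩ := hstab
  have hfix : Dfun R (f n) = f n := by rw [← hsucc]; exact hn
  have hGcomp : completeExt R (f n) := by
    refine ⟨hadm n, fun a ha => ?_⟩
    rw [← hfix]; exact ha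
  have hmin : ∀ S, completeExt R S → f n ⊆ S := by
    intro S hS
    have hDS : Dfun R S ⊆ S := fun a ha => hS.2 a ha
    have : ∀ k, f k ⊆ S := by
      intro k
      induction k with
      | zero => intro a ha; exact ha.elim
      | succ m ih => rw [hsucc]; exact (Dfun_mono R ih).trans hDS
    exact this n
  refine ⟨f n, hGcomp, hmin, ?_⟩
  intro G' hG' hminG'
  by_contra hne
  exact hminG' (f n) hGcomp ((hmin G' hG').ssubset_of_ne (Ne.symm hne))
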